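/- arXiv:1305.2396 — 3 statements merged into one kernel-verified Lean document; each statement's English description precedes it below -/
import Mathlib

section
/- (Perron–Frobenius, positive case) Let B be a d×d matrix with all entries strictly positive. Then there exist λ > 0 and vectors r, l ∈ ℝ^d with all entries strictly positive such that Br = λr and lᵀB = λlᵀ; moreover the left and right eigenvalues obtained this way coincide. -/
/-!
Among pairs `(x, t)` with `x` a probability vector and `t • x ≤ B *ᵥ x`,
a pair with maximal `t` exists by compactness. If `t • x ≠ B *ᵥ x`, positivity of `B` makes
`t • (B *ᵥ x) < B *ᵥ (B *ᵥ x)` strict in every coordinate, so `t` could be increased; hence the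
maximiser is an eigenvector, and it is positive because `B` maps nonzero nonnegative vectors to
positive ones. Applied to `Bᵀ` this gives a positive left eigenvector, and pairing the two
eigenvectors, `λ (l ⬝ᵥ r) = l ⬝ᵥ B r = μ (l ⬝ᵥ r)` with `l ⬝ᵥ r > 0`, so the eigenvalues agree.
-/

open Finset Filter Topology Matrix

theorem exists_gt_forall_mul_lt {ι : Type*} [Finite ι] {t : ℝ} {z w : ι → ℝ}
    (h : ∀ i, t * z i < w i) : ∃ s, t < s ∧ ∀ i, s * z i < w i := by
  have : ∀ᶠ s in 𝓝 t, ∀ i, s * z i < w i := eventually_all.2 fun i =>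
    (continuous_mul_const (z i)).continuousAt.eventually_lt continuousAt_const (h i)
  have hgt : ∀ᶠ s in 𝓝[>] t, t < s := self_mem_nhdsWithin
  exact (hgt.and (this.filter_mono nhdsWithin_le_nhds)).exists

theorem apply_le_one_of_sum_eq_one {ι : Type*} [Fintype ι] {x : ι → ℝ} (hx : 0 ≤ x)
    (hx1 : ∑ i, x i = 1) (j : ι) : x j ≤ 1 :=
  hx1 ▸ single_le_sum (fun k _ => hx k) (mem_univ j)

namespace Matrix

variable {ι : Type*} [Fintype ι]

theorem mulVec_apply_pos_of_pos {B : Matrix ι ι ℝ} (hB : ∀ i j, 0 < B i j) {x : ι → ℝ}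
    (hx : 0 < x) (i : ι) : 0 < (B *ᵥ x) i := by
  obtain ⟨hx0, j, hj⟩ := Pi.lt_def.1 hx
  exact sum_pos' (fun k _ => mul_nonneg (hB i k).le (hx0 k))
    ⟨j, mem_univ j, mul_pos (hB i j) hj⟩

theorem le_sum_sum_of_smul_le_mulVec {B : Matrix ι ι ℝ} (hB : ∀ i j, 0 ≤ B i j) {x : ι → ℝ}
    (hx : 0 ≤ x) (hx1 : ∑ i, x i = 1) {t : ℝ} (ht : t • x ≤ B *ᵥ x) :
    t ≤ ∑ i, ∑ j, B i j := by
  calc t = ∑ i, t * x i := by rw [← mul_sum, hx1, mul_one]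
    _ ≤ ∑ i, (B *ᵥ x) i := sum_le_sum fun i _ => ht i
    _ ≤ ∑ i, ∑ j, B i j := sum_le_sum fun i _ => sum_le_sum fun j _ =>
        mul_le_of_le_one_right (hB i j) (apply_le_one_of_sum_eq_one hx hx1 j)

def collatzWielandtSet (B : Matrix ι ι ℝ) : Set ((ι → ℝ) × ℝ) :=
  {p | 0 ≤ p.1 ∧ ∑ i, p.1 i = 1 ∧ 0 ≤ p.2 ∧ p.2 • p.1 ≤ B *ᵥ p.1}

theorem isCompact_collatzWielandtSet {B : Matrix ι ι ℝ} (hB : ∀ i j, 0 ≤ B i j) :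
    IsCompact (collatzWielandtSet B) := by
  have hclosed : IsClosed (collatzWielandtSet B) :=
    (isClosed_le continuous_const continuous_fst).inter <|
      (isClosed_eq (by fun_prop) continuous_const).inter <|
        (isClosed_le continuous_const continuous_snd).inter <|
          isClosed_le (by fun_prop) (continuous_const.matrix_mulVec continuous_fst)
  have hsub : collatzWielandtSet B ⊆ Set.Icc 0 1 ×ˢ Set.Icc 0 (∑ i, ∑ j, B i j) := by
    rintro ⟨x, t⟩ ⟨hx, hx1, ht, hBx⟩
    exact ⟨⟨hx, apply_le_one_of_sum_eq_one hx hx1⟩,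
      ht, le_sum_sum_of_smul_le_mulVec hB hx hx1 hBx⟩
  exact (isCompact_Icc.prod isCompact_Icc).of_isClosed_subset hclosed hsub

theorem single_zero_mem_collatzWielandtSet {B : Matrix ι ι ℝ} (hB : ∀ i j, 0 ≤ B i j)
    [DecidableEq ι] (j : ι) : (Pi.single j 1, 0) ∈ collatzWielandtSet B := by
  have hsingle : (0 : ι → ℝ) ≤ Pi.single j 1 := Pi.single_nonneg.2 zero_le_one
  refine ⟨hsingle, by simp, le_rfl, ?_⟩
  rw [zero_smul]
  exact fun i => sum_nonneg fun k _ => mul_nonneg (hB i k) (hsingle k)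

theorem pos_of_mem_collatzWielandtSet {B : Matrix ι ι ℝ} {p : (ι → ℝ) × ℝ}
    (hp : p ∈ collatzWielandtSet B) : 0 < p.1 :=
  hp.1.lt_of_ne fun h => by simpa [← h] using hp.2.1

theorem inv_sum_smul_mem_collatzWielandtSet {B : Matrix ι ι ℝ} {z : ι → ℝ} {s : ℝ}
    (hz : 0 ≤ z) (hz0 : 0 < ∑ i, z i) (hs : 0 ≤ s) (hsz : s • z ≤ B *ᵥ z) :
    ((∑ i, z i)⁻¹ • z, s) ∈ collatzWielandtSet B := by
  refine ⟨smul_nonneg (inv_nonneg.2 hz0.le) hz, ?_, hs, ?_⟩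
  · simp [← mul_sum, hz0.ne']
  · rw [mulVec_smul, smul_comm]
    exact smul_le_smul_of_nonneg_left hsz (inv_nonneg.2 hz0.le)

theorem exists_mem_collatzWielandtSet_lt {B : Matrix ι ι ℝ} (hB : ∀ i j, 0 < B i j)
    {x : ι → ℝ} {t : ℝ} (hxt : (x, t) ∈ collatzWielandtSet B) (hne : t • x ≠ B *ᵥ x) :
    ∃ p ∈ collatzWielandtSet B, t < p.2 := by
  have hx_pos : 0 < x := pos_of_mem_collatzWielandtSet hxt
  obtain ⟨hx, hx1, ht, hBx⟩ := hxt
  obtain ⟨-, j, -⟩ := Pi.lt_def.1 hx_pos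
  have hBx_pos : ∀ i, 0 < (B *ᵥ x) i := mulVec_apply_pos_of_pos hB hx_pos
  have hgap (i : ι) : t * (B *ᵥ x) i < (B *ᵥ (B *ᵥ x)) i := by
    have := mulVec_apply_pos_of_pos hB (sub_pos.2 (hBx.lt_of_ne hne)) i
    rwa [mulVec_sub, mulVec_smul, Pi.sub_apply, Pi.smul_apply, smul_eq_mul, sub_pos] at this
  obtain ⟨s, hts, hs⟩ := exists_gt_forall_mul_lt hgap
  exact ⟨_, inv_sum_smul_mem_collatzWielandtSet (fun i => (hBx_pos i).le)
    (sum_pos (fun i _ => hBx_pos i) ⟨j, mem_univ j⟩) (ht.trans hts.le) (fun i => (hs i).le), hts⟩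

theorem exists_pos_mulVec_eq_smul [Nonempty ι] {B : Matrix ι ι ℝ} (hB : ∀ i j, 0 < B i j) :
    ∃ lam : ℝ, 0 < lam ∧ ∃ r : ι → ℝ, (∀ i, 0 < r i) ∧ B *ᵥ r = lam • r := by
  classical
  obtain ⟨j⟩ := ‹Nonempty ι›
  have hB₀ (i j : ι) : 0 ≤ B i j := (hB i j).le
  obtain ⟨⟨r, lam⟩, hmem, hmax⟩ := (isCompact_collatzWielandtSet hB₀).exists_isMaxOn
    ⟨_, single_zero_mem_collatzWielandtSet hB₀ j⟩ continuous_snd.continuousOn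
  have hBr : B *ᵥ r = lam • r := by
    by_contra hne
    obtain ⟨p, hp, hlt⟩ := exists_mem_collatzWielandtSet_lt hB hmem (Ne.symm hne)
    exact (hmax hp).not_gt hlt
  have hlam_r (i : ι) : 0 < lam * r i := by
    simpa [hBr] using mulVec_apply_pos_of_pos hB (pos_of_mem_collatzWielandtSet hmem) i
  exact ⟨lam, pos_of_mul_pos_left (hlam_r j) (hmem.1 j), r,
    fun i => pos_of_mul_pos_right (hlam_r i) hmem.2.2.1, hBr⟩

theorem eq_of_mulVec_eq_smul_of_vecMul_eq_smul {R : Type*} [CommRing R] [NoZeroDivisors R]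
    {B : Matrix ι ι R} {r l : ι → R} {lam mu : R} (hr : B *ᵥ r = lam • r)
    (hl : l ᵥ* B = mu • l) (hlr : l ⬝ᵥ r ≠ 0) : lam = mu := by
  refine mul_right_cancel₀ hlr ?_
  calc lam * (l ⬝ᵥ r) = l ⬝ᵥ (B *ᵥ r) := by rw [hr, dotProduct_smul, smul_eq_mul]
    _ = (l ᵥ* B) ⬝ᵥ r := dotProduct_mulVec l B r
    _ = mu * (l ⬝ᵥ r) := by rw [hl, smul_dotProduct, smul_eq_mul]

end Matrix

/-- Perron–Frobenius theorem for matrices with strictly positive entries: there exist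
`λ > 0` and strictly positive right and left eigenvectors `r`, `l` for the same
eigenvalue `λ`. -/
theorem perron_frobenius_positive {d : ℕ} (B : Matrix (Fin d) (Fin d) ℝ)
    (hB : ∀ i j, 0 < B i j) :
    ∃ lam : ℝ, 0 < lam ∧ ∃ r l : Fin d → ℝ,
      (∀ i, 0 < r i) ∧ (∀ i, 0 < l i) ∧
      B.mulVec r = lam • r ∧ B.vecMul l = lam • l := by
  rcases isEmpty_or_nonempty (Fin d) with hd | hd
  · exact ⟨1, one_pos, 0, 0, isEmptyElim, isEmptyElim, Subsingleton.elim _ _,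
      Subsingleton.elim _ _⟩
  obtain ⟨lam, hlam, r, hr, hBr⟩ := exists_pos_mulVec_eq_smul hB
  obtain ⟨mu, -, l, hl, hBl⟩ := exists_pos_mulVec_eq_smul (B := Bᵀ) fun i j => hB j i
  rw [mulVec_transpose] at hBl
  have hlr : 0 < l ⬝ᵥ r := sum_pos (fun i _ => mul_pos (hl i) (hr i)) univ_nonempty
  obtain rfl := eq_of_mulVec_eq_smul_of_vecMul_eq_smul hBr hBl hlr.ne'
  exact ⟨lam, hlam, r, l, hr, hl, hBr, hBl⟩
end

section
/- For every finite Markov measure: if P is a d×d row-stochastic matrix with positive entries, π is its stationary probability vector, A(i,j) is a real function of two indices, M_{ij} = e^{A(i,j)} has Perron eigenvalue λ_A, and h(μ) = −Σ_{i,j} πᵢ P(i,j) log P(i,j) denotes the entropy of the corresponding Markov measure, then h(μ) + Σ_{i,j} πᵢ P(i,j) A(i,j) ≤ log λ_A, with equality when P = P_A, the stochasticization of M. -/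
/-!
Write `Q = P_A`. Since `log Q(i,j) = A(i,j) + log r_j - log r_i - log λ_A`, and the coboundary
`log r_j - log r_i` averages to zero under the stationary measure `π_i P(i,j)`, the free energy
minus `log λ_A` equals `-∑ᵢ πᵢ D(P(i,·) ‖ Q(i,·))`. Each relative entropy is nonnegative
because both rows are probability vectors, and vanishes when `P = Q`.
-/

open Finset
open Real (log exp)

theorem sum_mul_log_sub_log_le {ι : Type*} [Fintype ι] {p q : ι → ℝ}
    (hp : ∀ j, 0 < p j) (hq : ∀ j, 0 < q j) :
    ∑ j, p j * (log (q j) - log (p j)) ≤ ∑ j, q j - ∑ j, p j := by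
  rw [← sum_sub_distrib]
  refine sum_le_sum fun j _ => ?_
  have hlog : log (q j) - log (p j) ≤ q j / p j - 1 := by
    rw [← Real.log_div (hq j).ne' (hp j).ne']
    exact Real.log_le_sub_one_of_pos (div_pos (hq j) (hp j))
  calc p j * (log (q j) - log (p j)) ≤ p j * (q j / p j - 1) :=
        mul_le_mul_of_nonneg_left hlog (hp j).le
    _ = q j - p j := by rw [mul_sub, mul_div_cancel₀ _ (hp j).ne', mul_one]

section Markov

variable {ι : Type*} [Fintype ι] {π : ι → ℝ} {P : ι → ι → ℝ}

theorem sum_sum_mul_apply_left (hProw : ∀ i, ∑ j, P i j = 1) (f : ι → ℝ) :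
    ∑ i, ∑ j, π i * P i j * f i = ∑ i, π i * f i := by
  refine sum_congr rfl fun i _ => ?_
  rw [← sum_mul, ← mul_sum, hProw i, mul_one]

theorem sum_sum_mul_apply_right (hstat : ∀ j, ∑ i, π i * P i j = π j) (f : ι → ℝ) :
    ∑ i, ∑ j, π i * P i j * f j = ∑ j, π j * f j := by
  rw [sum_comm]
  simp_rw [← sum_mul, hstat]

theorem sum_sum_mul_coboundary (hProw : ∀ i, ∑ j, P i j = 1)
    (hstat : ∀ j, ∑ i, π i * P i j = π j) (f : ι → ℝ) :
    ∑ i, ∑ j, π i * P i j * (f j - f i) = 0 := by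
  simp_rw [mul_sub, sum_sub_distrib, sum_sum_mul_apply_right hstat,
    sum_sum_mul_apply_left hProw, sub_self]

theorem sum_sum_mul_const (hProw : ∀ i, ∑ j, P i j = 1) (hπsum : ∑ i, π i = 1) (c : ℝ) :
    ∑ i, ∑ j, π i * P i j * c = c := by
  rw [sum_sum_mul_apply_left hProw (fun _ => c), ← sum_mul, hπsum, one_mul]

end Markov

noncomputable def markovFreeEnergy {ι : Type*} [Fintype ι] (π : ι → ℝ) (P A : ι → ι → ℝ) : ℝ :=
  (-∑ i, ∑ j, π i * P i j * log (P i j)) + ∑ i, ∑ j, π i * P i j * A i j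

/-- The stochasticization `P_A` of `exp ∘ A` along the Perron eigenpair `(lam, r)`. -/
noncomputable def perronStochastic {ι : Type*} (A : ι → ι → ℝ) (lam : ℝ) (r : ι → ℝ) :
    ι → ι → ℝ :=
  fun i j => exp (A i j) * r j / (lam * r i)

section Perron

variable {ι : Type*} {A : ι → ι → ℝ} {lam : ℝ} {r : ι → ℝ}

theorem perronStochastic_pos (hlam : 0 < lam) (hr : ∀ i, 0 < r i) (i j : ι) :
    0 < perronStochastic A lam r i j :=
  div_pos (mul_pos (Real.exp_pos _) (hr j)) (mul_pos hlam (hr i))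

theorem sum_perronStochastic [Fintype ι] (hlam : 0 < lam) (hr : ∀ i, 0 < r i)
    (heig : ∀ i, ∑ j, exp (A i j) * r j = lam * r i) (i : ι) :
    ∑ j, perronStochastic A lam r i j = 1 := by
  simp only [perronStochastic]
  rw [← sum_div, heig i, div_self (mul_pos hlam (hr i)).ne']

theorem log_perronStochastic (hlam : 0 < lam) (hr : ∀ i, 0 < r i) (i j : ι) :
    log (perronStochastic A lam r i j) = A i j + (log (r j) - log (r i)) - log lam := by
  rw [perronStochastic,
    Real.log_div (mul_pos (Real.exp_pos _) (hr j)).ne' (mul_pos hlam (hr i)).ne',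
    Real.log_mul (Real.exp_ne_zero _) (hr j).ne', Real.log_mul hlam.ne' (hr i).ne', Real.log_exp]
  ring

theorem markovFreeEnergy_sub_log_eq [Fintype ι] {π : ι → ℝ} {P : ι → ι → ℝ}
    (hProw : ∀ i, ∑ j, P i j = 1) (hπsum : ∑ i, π i = 1)
    (hstat : ∀ j, ∑ i, π i * P i j = π j) (hlam : 0 < lam) (hr : ∀ i, 0 < r i) :
    markovFreeEnergy π P A - log lam =
      ∑ i, π i * ∑ j, P i j * (log (perronStochastic A lam r i j) - log (P i j)) := by
  have hterm : ∀ i j, π i * (P i j * (log (perronStochastic A lam r i j) - log (P i j))) =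
      π i * P i j * A i j + π i * P i j * (log (r j) - log (r i))
        - π i * P i j * log lam - π i * P i j * log (P i j) := by
    intro i j
    rw [log_perronStochastic hlam hr]
    ring
  simp_rw [mul_sum, hterm, sum_sub_distrib, sum_add_distrib,
    sum_sum_mul_coboundary hProw hstat, sum_sum_mul_const hProw hπsum, markovFreeEnergy]
  ring

end Perron

/-- Free energy of a Markov measure is at most `log λ_A`: for any row-stochastic
positive matrix `P` with stationary probability vector `π`,
` −Σ πᵢP(i,j) log P(i,j) + Σ πᵢP(i,j)A(i,j) ≤ log λ_A`,
where `λ_A` is the Perron eigenvalue of `M_{ij} = e^{A(i,j)}` (with positive right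
eigenvector `r`); equality holds when `P` is the stochasticization
`P_A(i,j) = e^{A(i,j)} rⱼ/(λ_A rᵢ)` of `M`. -/
theorem markov_free_energy_le_log_perron {d : ℕ} (A : Fin d → Fin d → ℝ)
    (P : Fin d → Fin d → ℝ) (hPpos : ∀ i j, 0 < P i j)
    (hProw : ∀ i, ∑ j, P i j = 1)
    (π : Fin d → ℝ) (hπpos : ∀ i, 0 < π i) (hπsum : ∑ i, π i = 1)
    (hstat : ∀ j, ∑ i, π i * P i j = π j)
    (lam : ℝ) (hlam : 0 < lam) (r : Fin d → ℝ) (hr : ∀ i, 0 < r i)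
    (heig : ∀ i, ∑ j, Real.exp (A i j) * r j = lam * r i) :
    (-∑ i, ∑ j, π i * P i j * Real.log (P i j)) +
        ∑ i, ∑ j, π i * P i j * A i j ≤ Real.log lam ∧
      ((P = fun i j => Real.exp (A i j) * r j / (lam * r i)) →
        (-∑ i, ∑ j, π i * P i j * Real.log (P i j)) +
            ∑ i, ∑ j, π i * P i j * A i j = Real.log lam) := by
  change markovFreeEnergy π P A ≤ log lam ∧
    (P = perronStochastic A lam r → markovFreeEnergy π P A = log lam)
  have hgap := markovFreeEnergy_sub_log_eq (A := A) hProw hπsum hstat hlam hr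
  constructor
  · suffices ∑ i, π i * ∑ j, P i j * (log (perronStochastic A lam r i j) - log (P i j)) ≤ 0 by
      linarith
    refine sum_nonpos fun i _ => mul_nonpos_of_nonneg_of_nonpos (hπpos i).le ?_
    have hgibbs := sum_mul_log_sub_log_le (hPpos i) (perronStochastic_pos (A := A) hlam hr i)
    rwa [sum_perronStochastic hlam hr heig, hProw, sub_self] at hgibbs
  · rintro rfl
    simp only [sub_self, mul_zero, sum_const_zero] at hgap
    linarith
end

section
/- Every d×d matrix A with all entries real (no −∞ entries) has a max-plus eigenvalue: there exist λ ∈ ℝ and v ∈ ℝ^d such that max_j (A_{ij} + v_j) = λ + v_i for every i = 1,…,d. Moreover this eigenvalue λ is unique: if max_j(A_{ij}+v_j) = λ+v_i and max_j(A_{ij}+u_j) = μ+u_i for some real vectors u, v, then λ = μ. -/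
/-!
For `0 ≤ t < 1` the discounted map `x ↦ A (t • x)` is a `t`-contraction for the sup norm, so it
has a fixed point `v`. Normalising, `x = v - v i₀` and `λ = (1 - t) v i₀` satisfy
`A (t • x) = λ + x`, and both stay bounded by a multiple of `max |A i j|` independently of `t`;
a limit point as `t → 1` is an eigenpair. For uniqueness, at an index `i` maximising `v - u`,
`λ + v i = (A v) i ≤ (A u) i + (v i - u i) = μ + v i`.
-/

open Filter Topology Metric

namespace MaxPlus

variable {ι : Type*}

noncomputable def mulVec (A : ι → ι → ℝ) (x : ι → ℝ) : ι → ℝ := fun i => ⨆ j, A i j + x j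

section Order

variable [Finite ι] [Nonempty ι]

lemma ciSup_add_const (f : ι → ℝ) (c : ℝ) : (⨆ j, f j + c) = (⨆ j, f j) + c :=
  ((OrderIso.addRight c).map_ciSup (Finite.bddAbove_range f)).symm

lemma ciSup_le_ciSup_add {f g : ι → ℝ} {c : ℝ} (h : ∀ j, f j ≤ g j + c) :
    (⨆ j, f j) ≤ (⨆ j, g j) + c := by
  rw [← ciSup_add_const]
  exact ciSup_mono (Finite.bddAbove_range _) h

lemma mulVec_le_mulVec_add {A : ι → ι → ℝ} {x y : ι → ℝ} {i k : ι} {c : ℝ}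
    (h : ∀ j, A i j + x j ≤ A k j + y j + c) : mulVec A x i ≤ mulVec A y k + c :=
  ciSup_le_ciSup_add h

lemma mulVec_add_const (A : ι → ι → ℝ) (x : ι → ℝ) (c : ℝ) (i : ι) :
    mulVec A (fun j => x j + c) i = mulVec A x i + c := by
  simp only [mulVec, ← add_assoc]
  exact ciSup_add_const _ c

theorem eigenvalue_le {A : ι → ι → ℝ} {lam mu : ℝ} {v u : ι → ℝ}
    (hv : ∀ i, mulVec A v i = lam + v i) (hu : ∀ i, mulVec A u i = mu + u i) : lam ≤ mu := by
  obtain ⟨i, hi⟩ := Finite.exists_max fun j => v j - u j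
  have key : mulVec A v i ≤ mulVec A u i + (v i - u i) :=
    mulVec_le_mulVec_add fun j => by linarith [hi j]
  linarith [hv i, hu i]

end Order

variable [Fintype ι] [Nonempty ι]

lemma dist_mulVec_le (A : ι → ι → ℝ) (x y : ι → ℝ) : dist (mulVec A x) (mulVec A y) ≤ dist x y := by
  have hle : ∀ x y : ι → ℝ, ∀ i, mulVec A x i ≤ mulVec A y i + dist x y := fun x y i =>
    mulVec_le_mulVec_add fun j => by
      linarith [le_abs_self (x j - y j), Real.dist_eq (x j) (y j) ▸ dist_le_pi_dist x y j]
  refine (dist_pi_le_iff dist_nonneg).2 fun i => ?_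
  rw [Real.dist_eq, abs_sub_le_iff]
  exact ⟨by linarith [hle x y i], by linarith [hle y x i, dist_comm x y]⟩

lemma lipschitzWith_mulVec (A : ι → ι → ℝ) : LipschitzWith 1 (mulVec A) :=
  .of_dist_le_mul fun x y => by simpa using dist_mulVec_le A x y

lemma exists_mulVec_smul_eq_self (A : ι → ι → ℝ) {t : ℝ} (ht₀ : 0 ≤ t) (ht₁ : t < 1) :
    ∃ v : ι → ℝ, mulVec A (t • v) = v := by
  lift t to NNReal using ht₀
  have hf : ContractingWith t fun v : ι → ℝ => mulVec A ((t : ℝ) • v) :=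
    ⟨mod_cast ht₁, ((lipschitzWith_mulVec A).comp (lipschitzWith_smul (t : ℝ))).weaken (by simp)⟩
  exact ⟨hf.fixedPoint, hf.fixedPoint_isFixedPt⟩

lemma exists_discounted_eigenpair (A : ι → ι → ℝ) {K : ℝ} (hK : ∀ i j, |A i j| ≤ K) {t : ℝ}
    (ht₀ : 0 ≤ t) (ht₁ : t < 1) :
    ∃ p ∈ closedBall (0 : ℝ × (ι → ℝ)) (3 * K), ∀ i, mulVec A (t • p.2) i = p.1 + p.2 i := by
  obtain ⟨v, hv⟩ := exists_mulVec_smul_eq_self A ht₀ ht₁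
  obtain ⟨i₀⟩ := ‹Nonempty ι›
  have hK₀ : 0 ≤ K := (abs_nonneg _).trans (hK i₀ i₀)
  have hv_apply (i : ι) : mulVec A (t • v) i = v i := congrFun hv i
  have hosc (i k : ι) : v i ≤ v k + 2 * K := by
    rw [← hv_apply, ← hv_apply k]
    exact mulVec_le_mulVec_add fun j => by linarith [abs_le.1 (hK i j), abs_le.1 (hK k j)]
  have hlow : A i₀ i₀ + t * v i₀ ≤ v i₀ :=
    (le_ciSup (f := fun j => A i₀ j + (t • v) j) (Finite.bddAbove_range _) i₀).trans_eq
      (hv_apply i₀)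
  have hup : v i₀ ≤ K + t * (v i₀ + 2 * K) := (hv_apply i₀).symm.trans_le <| ciSup_le fun j => by
    have := mul_le_mul_of_nonneg_left (hosc j i₀) ht₀
    simp only [Pi.smul_apply, smul_eq_mul]
    linarith [abs_le.1 (hK i₀ j)]
  refine ⟨((1 - t) * v i₀, fun j => v j - v i₀), ?_, fun i => ?_⟩
  · rw [mem_closedBall_zero_iff, norm_prod_le_iff, pi_norm_le_iff_of_nonneg (by positivity)]
    refine ⟨?_, fun j => ?_⟩ <;> rw [Real.norm_eq_abs, abs_le]
    · constructor <;> nlinarith [abs_le.1 (hK i₀ i₀)]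
    · constructor <;> linarith [hosc j i₀, hosc i₀ j]
  · have : t • (fun j => v j - v i₀) = fun j => (t • v) j + -(t * v i₀) := by
      ext j; simp only [Pi.smul_apply, smul_eq_mul]; ring
    rw [this, mulVec_add_const, hv_apply]
    ring

theorem exists_eigenpair (A : ι → ι → ℝ) :
    ∃ (lam : ℝ) (v : ι → ℝ), ∀ i, mulVec A v i = lam + v i := by
  obtain ⟨K, hK⟩ : ∃ K, ∀ i j, |A i j| ≤ K :=
    ⟨⨆ p : ι × ι, |A p.1 p.2|, fun i j =>
      le_ciSup (f := fun p : ι × ι => |A p.1 p.2|) (Finite.bddAbove_range _) (i, j)⟩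
  set t : ℕ → ℝ := fun n => n / (n + 1)
  choose p hpK hp using fun n : ℕ => exists_discounted_eigenpair A hK (t := t n)
    (by positivity) ((div_lt_one (by positivity)).2 (by linarith))
  obtain ⟨⟨lam, v⟩, -, φ, hφ, hlim⟩ := (isCompact_closedBall _ _).tendsto_subseq hpK
  have ht : Tendsto (t ∘ φ) atTop (𝓝 1) := (tendsto_natCast_div_add_atTop 1).comp hφ.tendsto_atTop
  have hlam : Tendsto (fun n => (p (φ n)).1) atTop (𝓝 lam) := (continuous_fst.tendsto _).comp hlim
  have hv : Tendsto (fun n => (p (φ n)).2) atTop (𝓝 v) := (continuous_snd.tendsto _).comp hlim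
  have htv : Tendsto (fun n => t (φ n) • (p (φ n)).2) atTop (𝓝 v) := by simpa using ht.smul hv
  refine ⟨lam, v, fun i => tendsto_nhds_unique (l := atTop)
    (f := fun n => mulVec A (t (φ n) • (p (φ n)).2) i) ?_ ?_⟩
  · exact (((continuous_apply i).comp (lipschitzWith_mulVec A).continuous).tendsto v).comp htv
  · simp_rw [hp]
    exact hlam.add (((continuous_apply i).tendsto v).comp hv)

end MaxPlus

/-- Every square matrix with real (finite) entries has a max-plus eigenvalue:
there exist `λ ∈ ℝ` and `v ∈ ℝ^d` with `max_j (A_{ij} + v_j) = λ + v_i` for all `i`;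
moreover this eigenvalue is unique. -/
theorem maxplus_eigenvalue_exists_unique {d : ℕ}
    (A : Fin (d + 1) → Fin (d + 1) → ℝ) :
    (∃ (lam : ℝ) (v : Fin (d + 1) → ℝ),
      ∀ i, (⨆ j, A i j + v j) = lam + v i) ∧
    (∀ (lam mu : ℝ) (v u : Fin (d + 1) → ℝ),
      (∀ i, (⨆ j, A i j + v j) = lam + v i) →
      (∀ i, (⨆ j, A i j + u j) = mu + u i) → lam = mu) :=
  ⟨MaxPlus.exists_eigenpair A, fun _ _ _ _ hv hu =>
    le_antisymm (MaxPlus.eigenvalue_le hv hu) (MaxPlus.eigenvalue_le hu hv)⟩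
end
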